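/- For k = 4, define D_min(w₁) = w₁·ln(6·p₁₁(w₁)) + (1-w₁)·ln(6·p₀₀(w₁)), where w₂(w₁) = (2 - √D)/3, D = 12(w₁ - 1/2)² + 1, p₁₁ = w₁ - w₂, p₀₀ = 1 - w₁ - w₂. Then the second derivative of D_min is at least 12 on (0,1), i.e. D_min''(w₁) ≥ 12. -/

import Mathlib

/-!
Write `r = √D`, `p₁₁ = w - w₂` and `p₀₀ = 1 - w - w₂`. The choice of `w₂` makes
`w · p₁₁' = (1 + 2/r) · p₁₁` and `(1 - w) · p₀₀' = -(1 + 2/r) · p₀₀`, so in the derivative of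
`D_min` the terms coming from the variation of `p₁₁` and `p₀₀` cancel (an envelope identity):
`D_min' = log (6 p₁₁) - log (6 p₀₀)`. Differentiating once more,
`D_min'' = (1 + 2/r) / (w (1 - w))`. Since `12 w (1 - w) = 4 - r²`, the bound `D_min'' ≥ 12`
becomes `r³ - 3r + 2 = (r - 1)² (r + 2) ≥ 0`, true as `r ≥ 1`.
-/

noncomputable def w2fun (w₁ : ℝ) : ℝ := (2 - Real.sqrt (12 * (w₁ - 1 / 2) ^ 2 + 1)) / 3

noncomputable def Dmin (w₁ : ℝ) : ℝ :=
  w₁ * Real.log (6 * (w₁ - w2fun w₁)) + (1 - w₁) * Real.log (6 * (1 - w₁ - w2fun w₁))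

open Real

noncomputable def sqrtD (w : ℝ) : ℝ := √(12 * (w - 1 / 2) ^ 2 + 1)

lemma w2fun_eq (w : ℝ) : w2fun w = (2 - sqrtD w) / 3 := rfl

lemma sqrtD_sq (w : ℝ) : sqrtD w ^ 2 = 12 * (w - 1 / 2) ^ 2 + 1 :=
  sq_sqrt (by positivity)

lemma one_le_sqrtD (w : ℝ) : 1 ≤ sqrtD w :=
  one_le_sqrt.mpr (by nlinarith [sq_nonneg (w - 1 / 2)])

lemma sqrtD_one_sub (w : ℝ) : sqrtD (1 - w) = sqrtD w := by
  unfold sqrtD; congr 1; ring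

lemma w2fun_one_sub (w : ℝ) : w2fun (1 - w) = w2fun w := by
  rw [w2fun_eq, w2fun_eq, sqrtD_one_sub]

lemma sub_w2fun_pos {w : ℝ} (hw : w ≠ 0) : 0 < w - w2fun w := by
  have hlt : (2 - 3 * w) ^ 2 < sqrtD w ^ 2 := by
    rw [sqrtD_sq]; nlinarith [sq_pos_of_ne_zero hw]
  have := abs_lt_of_sq_lt_sq hlt (by linarith [one_le_sqrtD w])
  rw [w2fun_eq]; linarith [le_abs_self (2 - 3 * w)]

lemma hasDerivAt_sqrtD (w : ℝ) : HasDerivAt sqrtD (12 * (w - 1 / 2) / sqrtD w) w := by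
  unfold sqrtD
  have hpoly : HasDerivAt (fun y : ℝ => 12 * (y - 1 / 2) ^ 2 + 1) (24 * (w - 1 / 2)) w := by
    refine ((((hasDerivAt_id' w).sub_const (1 / 2)).pow 2).const_mul 12).add_const 1
      |>.congr_deriv ?_
    ring
  refine (hpoly.sqrt (by positivity)).congr_deriv ?_
  field_simp; ring

lemma hasDerivAt_sub_w2fun (w : ℝ) :
    HasDerivAt (fun y => y - w2fun y) (1 + 4 * (w - 1 / 2) / sqrtD w) w := by
  refine ((hasDerivAt_id' w).sub (((hasDerivAt_sqrtD w).const_sub 2).div_const 3)).congr_deriv ?_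
  ring

lemma mul_deriv_sub_w2fun (w : ℝ) :
    w * (1 + 4 * (w - 1 / 2) / sqrtD w) = (1 + 2 / sqrtD w) * (w - w2fun w) := by
  have hr : sqrtD w ≠ 0 := by linarith [one_le_sqrtD w]
  rw [w2fun_eq]; field_simp
  linear_combination (-2 : ℝ) * sqrtD_sq w

lemma hasDerivAt_log_sub_w2fun {w : ℝ} (hw : w ≠ 0) :
    HasDerivAt (fun y => log (6 * (y - w2fun y))) ((1 + 2 / sqrtD w) / w) w := by
  have hp := sub_w2fun_pos hw
  refine (((hasDerivAt_sub_w2fun w).const_mul 6).log (by positivity)).congr_deriv ?_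
  field_simp
  linear_combination 2 * mul_deriv_sub_w2fun w

lemma hasDerivAt_log_one_sub_sub_w2fun {w : ℝ} (hw : w ≠ 1) :
    HasDerivAt (fun y => log (6 * (1 - y - w2fun y))) (-((1 + 2 / sqrtD w) / (1 - w))) w := by
  have h := (hasDerivAt_log_sub_w2fun (sub_ne_zero.mpr hw.symm)).comp_const_sub 1 w
  simp only [w2fun_one_sub, sqrtD_one_sub] at h
  exact h

lemma hasDerivAt_Dmin {w : ℝ} (hw₀ : w ≠ 0) (hw₁ : w ≠ 1) :
    HasDerivAt Dmin (log (6 * (w - w2fun w)) - log (6 * (1 - w - w2fun w))) w := by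
  have h₁₁ := (hasDerivAt_id' w).mul (hasDerivAt_log_sub_w2fun hw₀)
  have h₀₀ := ((hasDerivAt_id' w).const_sub 1).mul (hasDerivAt_log_one_sub_sub_w2fun hw₁)
  refine (h₁₁.add h₀₀).congr_deriv ?_
  have : 1 - w ≠ 0 := sub_ne_zero.mpr hw₁.symm
  field_simp
  ring

lemma hasDerivAt_deriv_Dmin {w : ℝ} (hw₀ : w ≠ 0) (hw₁ : w ≠ 1) :
    HasDerivAt (deriv Dmin) ((1 + 2 / sqrtD w) / (w * (1 - w))) w := by
  have hderiv : deriv Dmin =ᶠ[nhds w]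
      fun y => log (6 * (y - w2fun y)) - log (6 * (1 - y - w2fun y)) := by
    filter_upwards [eventually_ne_nhds hw₀, eventually_ne_nhds hw₁] with y hy₀ hy₁
    exact (hasDerivAt_Dmin hy₀ hy₁).deriv
  refine (((hasDerivAt_log_sub_w2fun hw₀).sub
    (hasDerivAt_log_one_sub_sub_w2fun hw₁)).congr_of_eventuallyEq hderiv).congr_deriv ?_
  have : 1 - w ≠ 0 := sub_ne_zero.mpr hw₁.symm
  field_simp
  ring

lemma twelve_mul_mul_one_sub_le (w : ℝ) : 12 * (w * (1 - w)) ≤ 1 + 2 / sqrtD w := by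
  have hr := one_le_sqrtD w
  have hcubic : 1 + 2 / sqrtD w - 12 * (w * (1 - w)) =
      (sqrtD w - 1) ^ 2 * (sqrtD w + 2) / sqrtD w := by
    field_simp
    linear_combination (-sqrtD w) * sqrtD_sq w
  have : 0 ≤ (sqrtD w - 1) ^ 2 * (sqrtD w + 2) / sqrtD w :=
    div_nonneg (mul_nonneg (sq_nonneg _) (by linarith)) (by linarith)
  linarith

theorem stmt_8 (w₁ : ℝ) (hw : w₁ ∈ Set.Ioo (0 : ℝ) 1) :
    12 ≤ deriv (deriv Dmin) w₁ := by
  obtain ⟨hw₀, hw₁⟩ := hw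
  rw [(hasDerivAt_deriv_Dmin hw₀.ne' hw₁.ne).deriv, le_div_iff₀ (by nlinarith)]
  exact twelve_mul_mul_one_sub_le w₁
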